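/- arXiv:1605.06254 — 4 statements merged into one kernel-verified Lean document; each statement's English description precedes it below -/
import Mathlib

section
/- Let p : ℝ → ℝ be a 2π-periodic function of class C² with p(φ) + p''(φ) > 0 for all φ, satisfying ∫₀^{2π} p(φ)cos φ dφ = 0 and ∫₀^{2π} p(φ)sin φ dφ = 0. Set L = ∫₀^{2π} p dφ, F = ½∫₀^{2π}(p² − p'²) dφ, A = ½∫₀^{2π} p² dφ and Δ = L² − 4πF. Then Δ ≥ 3π(A − F). -/
/-!
In Fourier terms, with `p = ∑ cₙ e^{inφ}`, one has `L = 2π c₀`, `∫ p² = 2π ∑ |cₙ|²` and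
`∫ p'² = 2π ∑ n² |cₙ|²`, so
`Δ - 3π(A - F) = L² - 2π ∫ p² + (π/2) ∫ p'² = π² ∑_{n ≠ 0} (n² - 4) |cₙ|²`.
The Steiner point conditions say exactly that `c₁ = c₋₁ = 0`, so every remaining term has
`n² ≥ 4`: the inequality is Wirtinger's inequality for functions orthogonal to the
first harmonics.
-/

open Real MeasureTheory Set Complex
open scoped ENNReal

theorem ContinuousOn.memLp_restrict_Ioc {E : Type*} [NormedAddCommGroup E] {a b : ℝ}
    {f : ℝ → E} (hf : ContinuousOn f (Icc a b)) (q : ℝ≥0∞) :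
    MemLp f q (volume.restrict (Ioc a b)) := by
  obtain ⟨C, hC⟩ := isCompact_Icc.exists_bound_of_continuousOn hf
  exact MemLp.of_bound ((hf.mono Ioc_subset_Icc_self).aestronglyMeasurable measurableSet_Ioc) C
    ((ae_restrict_iff' measurableSet_Ioc).2 (.of_forall fun x hx => hC x (Ioc_subset_Icc_self hx)))

section FourierCoeffOn

variable {a b : ℝ} (hab : a < b)

theorem fourierCoeffOn_zero (f : ℝ → ℂ) :
    fourierCoeffOn hab f 0 = ((b - a)⁻¹ : ℝ) • ∫ x in a..b, f x := by
  simp [fourierCoeffOn_eq_integral]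

theorem fourierCoeffOn_deriv {f f' : ℝ → ℂ} (hf : ∀ x ∈ Icc a b, HasDerivAt f (f' x) x)
    (hf' : IntervalIntegrable f' volume a b) (hfab : f a = f b) {n : ℤ} (hn : n ≠ 0) :
    fourierCoeffOn hab f' n = 2 * π * I * n / (b - a) * fourierCoeffOn hab f n := by
  rw [fourierCoeffOn_of_hasDerivAt (f := f) hab hn (by rwa [uIcc_of_le hab.le]) hf', hfab,
    sub_self, mul_zero, zero_sub]
  have : (b - a : ℂ) ≠ 0 := by exact_mod_cast (sub_pos.2 hab).ne'
  field_simp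

theorem norm_sq_fourierCoeffOn_deriv {f f' : ℝ → ℂ} (hf : ∀ x ∈ Icc a b, HasDerivAt f (f' x) x)
    (hf' : IntervalIntegrable f' volume a b) (hfab : f a = f b) {n : ℤ} (hn : n ≠ 0) :
    ‖fourierCoeffOn hab f' n‖ ^ 2
      = (2 * π / (b - a)) ^ 2 * n ^ 2 * ‖fourierCoeffOn hab f n‖ ^ 2 := by
  have : 2 * π * I * n / (b - a) = ((2 * π / (b - a) * n : ℝ) : ℂ) * I := by
    push_cast; ring
  rw [fourierCoeffOn_deriv hab hf hf' hfab hn, this, norm_mul, norm_mul, norm_I, norm_real,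
    Real.norm_eq_abs, mul_one, mul_pow, sq_abs, mul_pow]

theorem wirtinger_of_fourierCoeffOn_one_eq_zero {f f' : ℝ → ℂ}
    (hf : ∀ x ∈ Icc a b, HasDerivAt f (f' x) x) (hf' : ContinuousOn f' (Icc a b))
    (hfab : f a = f b) (h₁ : fourierCoeffOn hab f 1 = 0) (hneg₁ : fourierCoeffOn hab f (-1) = 0) :
    4 * (2 * π / (b - a)) ^ 2 * ((∫ x in a..b, ‖f x‖ ^ 2) - ‖∫ x in a..b, f x‖ ^ 2 / (b - a))
      ≤ ∫ x in a..b, ‖f' x‖ ^ 2 := by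
  set c := fourierCoeffOn hab f
  set k := 2 * π / (b - a)
  have hba : 0 < b - a := sub_pos.2 hab
  have hfc : ContinuousOn f (Icc a b) := fun x hx => (hf x hx).continuousAt.continuousWithinAt
  have hc := hasSum_sq_fourierCoeffOn hab (hfc.memLp_restrict_Ioc 2)
  have hc' := hasSum_sq_fourierCoeffOn hab (hf'.memLp_restrict_Ioc 2)
  have hc₀ : ‖c 0‖ ^ 2 = ‖∫ x in a..b, f x‖ ^ 2 / (b - a) ^ 2 := by
    rw [show c 0 = _ from fourierCoeffOn_zero hab f, norm_smul, mul_pow,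
      Real.norm_of_nonneg (by positivity)]
    field_simp
  have hle : ∀ n : ℤ, 4 * k ^ 2 * Function.update (fun n => ‖c n‖ ^ 2) 0 0 n
      ≤ ‖fourierCoeffOn hab f' n‖ ^ 2 := by
    intro n
    rcases eq_or_ne n 0 with rfl | hn
    · simp
    rw [Function.update_of_ne hn,
      norm_sq_fourierCoeffOn_deriv hab hf (hf'.intervalIntegrable_of_Icc hab.le) hfab hn]
    change 4 * k ^ 2 * ‖c n‖ ^ 2 ≤ k ^ 2 * n ^ 2 * ‖c n‖ ^ 2
    rcases eq_or_ne n 1 with rfl | hn₁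
    · simp [c, h₁]
    rcases eq_or_ne n (-1) with rfl | hn_neg₁
    · simp [c, hneg₁]
    have h4 : (4 : ℤ) ≤ n ^ 2 := by
      rcases (show 2 ≤ n ∨ n ≤ -2 by omega) with h | h <;> nlinarith
    have h4' : (4 : ℝ) ≤ n ^ 2 := by exact_mod_cast h4
    nlinarith [mul_le_mul_of_nonneg_right h4' (by positivity : 0 ≤ k ^ 2 * ‖c n‖ ^ 2)]
  have key := hasSum_le hle ((hc.update 0 0).mul_left (4 * k ^ 2)) hc'
  rw [hc₀, smul_eq_mul, smul_eq_mul] at key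
  calc 4 * k ^ 2 * ((∫ x in a..b, ‖f x‖ ^ 2) - ‖∫ x in a..b, f x‖ ^ 2 / (b - a))
      = (b - a) * (4 * k ^ 2 * (0 - ‖∫ x in a..b, f x‖ ^ 2 / (b - a) ^ 2
          + (b - a)⁻¹ * ∫ x in a..b, ‖f x‖ ^ 2)) := by
        field_simp; ring
    _ ≤ (b - a) * ((b - a)⁻¹ * ∫ x in a..b, ‖f' x‖ ^ 2) := by gcongr
    _ = ∫ x in a..b, ‖f' x‖ ^ 2 := by field_simp

end FourierCoeffOn

theorem fourierCoeffOn_ofReal_two_pi {f : ℝ → ℝ} (hf : IntervalIntegrable f volume 0 (2 * π))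
    (n : ℤ) :
    fourierCoeffOn two_pi_pos (fun x => (f x : ℂ)) n
      = (2 * π)⁻¹ * ((∫ x in 0..2 * π, f x * Real.cos (n * x))
          - (∫ x in 0..2 * π, f x * Real.sin (n * x)) * I) := by
  have hexp : ∀ x : ℝ, fourier (-n) (x : AddCircle (2 * π - 0)) • (f x : ℂ)
      = ((f x * Real.cos (n * x) : ℝ) : ℂ) - ((f x * Real.sin (n * x) : ℝ) : ℂ) * I := by
    intro x
    rw [fourier_coe_apply, smul_eq_mul,
      show 2 * π * I * (-n : ℤ) * x / (2 * π - 0 : ℝ) = (-(n * x : ℝ) : ℂ) * I by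
        push_cast; field_simp; ring,
      exp_mul_I, Complex.cos_neg, Complex.sin_neg, ← ofReal_cos, ← ofReal_sin]
    push_cast
    ring
  have hcos := hf.mul_continuousOn (g := fun x => Real.cos (n * x)) (by fun_prop)
  have hsin := hf.mul_continuousOn (g := fun x => Real.sin (n * x)) (by fun_prop)
  have hcos' : IntervalIntegrable (fun x => ((f x * Real.cos (n * x) : ℝ) : ℂ)) volume 0 (2 * π) :=
    ⟨hcos.1.ofReal, hcos.2.ofReal⟩
  have hsin' : IntervalIntegrable (fun x => ((f x * Real.sin (n * x) : ℝ) : ℂ)) volume 0 (2 * π) :=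
    ⟨hsin.1.ofReal, hsin.2.ofReal⟩
  rw [fourierCoeffOn_eq_integral]
  simp_rw [hexp]
  rw [intervalIntegral.integral_sub hcos' (hsin'.mul_const I),
    intervalIntegral.integral_mul_const, intervalIntegral.integral_ofReal,
    intervalIntegral.integral_ofReal, sub_zero, real_smul]
  push_cast
  ring

theorem wirtinger_of_orthogonal_cos_sin {f : ℝ → ℝ} (hper : Function.Periodic f (2 * π))
    (hf : ContDiff ℝ 1 f) (hcos : ∫ x in 0..2 * π, f x * Real.cos x = 0)
    (hsin : ∫ x in 0..2 * π, f x * Real.sin x = 0) :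
    4 * ((∫ x in 0..2 * π, f x ^ 2) - (∫ x in 0..2 * π, f x) ^ 2 / (2 * π))
      ≤ ∫ x in 0..2 * π, deriv f x ^ 2 := by
  have hint : IntervalIntegrable f volume 0 (2 * π) := hf.continuous.intervalIntegrable _ _
  have h₁ := fourierCoeffOn_ofReal_two_pi hint 1
  have hneg₁ := fourierCoeffOn_ofReal_two_pi hint (-1)
  simp only [Int.cast_one, one_mul, Int.cast_neg, neg_mul, Real.cos_neg, Real.sin_neg, mul_neg,
    intervalIntegral.integral_neg, hcos, hsin] at h₁ hneg₁
  have := wirtinger_of_fourierCoeffOn_one_eq_zero two_pi_pos (f := fun x => (f x : ℂ))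
    (fun x _ => (hf.differentiable one_ne_zero x).hasDerivAt.ofReal_comp)
    (Complex.continuous_ofReal.comp (hf.continuous_deriv le_rfl)).continuousOn
    (by simpa using congrArg ofReal (hper 0).symm) (by simpa using h₁) (by simpa using hneg₁)
  simpa [intervalIntegral.integral_ofReal, sq_abs, pi_ne_zero] using this

theorem isoperimetric_deficit_ge_three_pi_pedal_area_diff_general
    (p : ℝ → ℝ)
    (hper : Function.Periodic p (2 * π))
    (hC2 : ContDiff ℝ 2 p)
    (hcos : ∫ φ in (0:ℝ)..(2 * π), p φ * Real.cos φ = 0)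
    (hsin : ∫ φ in (0:ℝ)..(2 * π), p φ * Real.sin φ = 0)
    (L F A Δ : ℝ)
    (hL : L = ∫ φ in (0:ℝ)..(2 * π), p φ)
    (hF : F = (1 / 2) * ∫ φ in (0:ℝ)..(2 * π), (p φ ^ 2 - (deriv p φ) ^ 2))
    (hA : A = (1 / 2) * ∫ φ in (0:ℝ)..(2 * π), p φ ^ 2)
    (hΔ : Δ = L ^ 2 - 4 * π * F) :
    Δ ≥ 3 * π * (A - F) := by
  have hwirt := wirtinger_of_orthogonal_cos_sin hper (hC2.of_le one_le_two) hcos hsin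
  have hp : IntervalIntegrable (fun φ => p φ ^ 2) volume 0 (2 * π) :=
    (hC2.continuous.pow 2).intervalIntegrable _ _
  have hp' : IntervalIntegrable (fun φ => deriv p φ ^ 2) volume 0 (2 * π) :=
    ((hC2.continuous_deriv one_le_two).pow 2).intervalIntegrable _ _
  rw [intervalIntegral.integral_sub hp hp'] at hF
  rw [← hL] at hwirt
  set I₂ := ∫ φ in (0:ℝ)..(2 * π), p φ ^ 2
  set I₁ := ∫ φ in (0:ℝ)..(2 * π), deriv p φ ^ 2
  have key : 2 * π * I₂ - L ^ 2 ≤ π / 2 * I₁ :=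
    calc 2 * π * I₂ - L ^ 2 = π / 2 * (4 * (I₂ - L ^ 2 / (2 * π))) := by field_simp; ring
      _ ≤ π / 2 * I₁ := by gcongr
  rw [hΔ, hF, hA]
  linarith

/-- Theorem 3.1: Bonnesen-style lower bound for the isoperimetric deficit:
`Δ ≥ 3π(A − F)` where `A` is the area of the pedal curve with respect to the
Steiner point and `F` the area of the convex set. -/
theorem isoperimetric_deficit_ge_three_pi_pedal_area_diff
    (p : ℝ → ℝ)
    (hper : Function.Periodic p (2 * π))
    (hC2 : ContDiff ℝ 2 p)
    (hconv : ∀ φ, p φ + deriv (deriv p) φ > 0)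
    (hcos : ∫ φ in (0:ℝ)..(2 * π), p φ * Real.cos φ = 0)
    (hsin : ∫ φ in (0:ℝ)..(2 * π), p φ * Real.sin φ = 0)
    (L F A Δ : ℝ)
    (hL : L = ∫ φ in (0:ℝ)..(2 * π), p φ)
    (hF : F = (1 / 2) * ∫ φ in (0:ℝ)..(2 * π), (p φ ^ 2 - (deriv p φ) ^ 2))
    (hA : A = (1 / 2) * ∫ φ in (0:ℝ)..(2 * π), p φ ^ 2)
    (hΔ : Δ = L ^ 2 - 4 * π * F) :
    Δ ≥ 3 * π * (A - F) :=
  isoperimetric_deficit_ge_three_pi_pedal_area_diff_general p hper hC2 hcos hsin L F A Δ hL hF hA hΔ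
end

section
/- Let p : ℝ → ℝ be a 2π-periodic function of class C² with p(φ) + p''(φ) > 0 for all φ, satisfying ∫₀^{2π} p(φ)cos φ dφ = 0 and ∫₀^{2π} p(φ)sin φ dφ = 0, and suppose there is a constant w such that p(φ) + p(φ + π) = w for all φ (constant width). Set L = ∫₀^{2π} p dφ, F = ½∫₀^{2π}(p² − p'²) dφ, A = ½∫₀^{2π} p² dφ and Δ = L² − 4πF. Then Δ ≥ (32/9)π(A − F). -/
/-!
Put `q = p - w / 2`. Constant width says `q (φ + π) = -q φ`, so only the odd Fourier modes of `q`
survive, and the Steiner-point condition removes the modes `±1`. Since `q' = p'`, Parseval gives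
the Wirtinger-type inequality `∫ p'² ≥ 9 ∫ q²`. On the other hand `L = π w` and
`∫ p² = ∫ q² + π w² / 2`, so `Δ = 2π (∫ p'² - ∫ q²)` while `A - F = ½ ∫ p'²`, and the claim is
exactly that inequality.
-/

open Real
open MeasureTheory Set Function
open Complex (I)
open scoped Interval

theorem Function.Antiperiodic.intervalIntegral_add_two_mul_eq_zero {E : Type*}
    [NormedAddCommGroup E] [NormedSpace ℝ E] {f : ℝ → E} {c : ℝ} (hf : Antiperiodic f c)
    (a : ℝ) : ∫ x in a..a + 2 * c, f x = 0 := by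
  -- Shifting by `c` negates the integrand but, by `2c`-periodicity, not the integral.
  have hshift : ∫ x in a..a + 2 * c, f (x + c) = ∫ x in a..a + 2 * c, f x := by
    rw [intervalIntegral.integral_comp_add_right, add_right_comm,
      hf.periodic_two_mul.intervalIntegral_add_eq]
  simp only [hf _, intervalIntegral.integral_neg, neg_eq_iff_add_eq_zero] at hshift
  simpa [← two_smul ℝ] using hshift

theorem periodic_fourier_coe_half_of_even (T : ℝ) {m : ℤ} (hm : Even m) :
    Periodic (fun x : ℝ => fourier m (x : AddCircle T)) (T / 2) := by
  obtain ⟨k, rfl⟩ := hm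
  intro x
  have : (k + k) • ((T / 2 : ℝ) : AddCircle T) = 0 := by
    rw [← two_mul, mul_comm, mul_zsmul, two_zsmul, ← AddCircle.coe_add, add_halves,
      AddCircle.coe_period, zsmul_zero]
  simp only [fourier_apply, AddCircle.coe_add, smul_add, this, add_zero]

theorem fourierCoeffOn_eq_zero_of_antiperiodic {E : Type*} [NormedAddCommGroup E]
    [NormedSpace ℂ E] {a b : ℝ} (hab : a < b) {f : ℝ → E}
    (hf : Antiperiodic f ((b - a) / 2)) {n : ℤ} (hn : Even n) :
    fourierCoeffOn hab f n = 0 := by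
  have hg : Antiperiodic (fun x : ℝ => fourier (-n) (x : AddCircle (b - a)) • f x)
      ((b - a) / 2) := fun x => by
    simp only [periodic_fourier_coe_half_of_even (b - a) hn.neg x, hf x, smul_neg]
  have hint := hg.intervalIntegral_add_two_mul_eq_zero a
  rw [show a + 2 * ((b - a) / 2) = b by ring] at hint
  rw [fourierCoeffOn_eq_integral, hint, smul_zero]

theorem fourierCoeffOn_deriv_of_hasDerivAt_of_eq {a b : ℝ} (hab : a < b) {f f' : ℝ → ℂ}
    (hf : ∀ x ∈ Icc a b, HasDerivAt f (f' x) x) (hf' : IntervalIntegrable f' volume a b)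
    (hfab : f a = f b) {n : ℤ} (hn : n ≠ 0) :
    fourierCoeffOn hab f' n = 2 * π * I * n / (b - a) * fourierCoeffOn hab f n := by
  rw [fourierCoeffOn_of_hasDerivAt hab hn (fun x hx => hf x (uIcc_of_le hab.le ▸ hx)) hf', hfab,
    sub_self, mul_zero, zero_sub]
  have hba : (b : ℂ) - a ≠ 0 := by exact_mod_cast (sub_pos.2 hab).ne'
  field_simp

theorem ContinuousOn.memLp_two_restrict_Ioc {E : Type*} [NormedAddCommGroup E] {a b : ℝ}
    {f : ℝ → E} (hf : ContinuousOn f (Icc a b)) :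
    MemLp f 2 (volume.restrict (Ioc a b)) :=
  (memLp_two_iff_integrable_sq_norm ((hf.mono Ioc_subset_Icc_self).aestronglyMeasurable
    measurableSet_Ioc)).2 ((hf.norm.pow 2).integrableOn_Icc.mono_set Ioc_subset_Icc_self)

theorem sq_mul_integral_norm_sq_le_integral_norm_deriv_sq {a b : ℝ} (hab : a < b)
    {f f' : ℝ → ℂ} (hf : ∀ x ∈ Icc a b, HasDerivAt f (f' x) x) (hf' : ContinuousOn f' (Icc a b))
    (hfab : f a = f b) (k : ℕ) (hk : ∀ n : ℤ, |n| < k → fourierCoeffOn hab f n = 0) :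
    (2 * π * k / (b - a)) ^ 2 * ∫ x in a..b, ‖f x‖ ^ 2 ≤ ∫ x in a..b, ‖f' x‖ ^ 2 := by
  have hfc : ContinuousOn f (Icc a b) := fun x hx => (hf x hx).continuousAt.continuousWithinAt
  have hsum := hasSum_sq_fourierCoeffOn hab hfc.memLp_two_restrict_Ioc
  have hsum' := hasSum_sq_fourierCoeffOn hab hf'.memLp_two_restrict_Ioc
  have hcoeff : ∀ n : ℤ, (2 * π * k / (b - a)) ^ 2 * ‖fourierCoeffOn hab f n‖ ^ 2 ≤
      ‖fourierCoeffOn hab f' n‖ ^ 2 := by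
    intro n
    rcases lt_or_ge |n| k with hn | hn
    · simp [hk n hn]
    rcases eq_or_ne n 0 with rfl | hn0
    · have hk0 : k = 0 := by exact_mod_cast hn.antisymm (by positivity)
      simp [hk0]
    rw [fourierCoeffOn_deriv_of_hasDerivAt_of_eq hab hf (hf'.intervalIntegrable_of_Icc hab.le)
      hfab hn0]
    have hnorm : ‖(2 * π * I * n / (b - a) : ℂ)‖ = 2 * π * |n| / (b - a) := by
      rw [← Complex.ofReal_sub, norm_div, Complex.norm_real,
        Real.norm_of_nonneg (sub_nonneg.2 hab.le)]
      simp [abs_of_pos pi_pos]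
    rw [norm_mul, mul_pow, hnorm]
    gcongr
    exact_mod_cast hn
  have hparseval := hasSum_le hcoeff (hsum.mul_left _) hsum'
  rw [smul_eq_mul, smul_eq_mul, ← mul_assoc, mul_comm _ (b - a)⁻¹, mul_assoc] at hparseval
  exact le_of_mul_le_mul_left hparseval (inv_pos.2 (sub_pos.2 hab))

theorem fourierCoeffOn_ofReal_eq_zero_of_integral_mul_cos_sin {q : ℝ → ℝ}
    (hq : IntervalIntegrable q volume 0 (2 * π))
    (hcos : ∫ x in (0 : ℝ)..2 * π, q x * cos x = 0)
    (hsin : ∫ x in (0 : ℝ)..2 * π, q x * sin x = 0) {n : ℤ} (hn : |n| = 1) :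
    fourierCoeffOn two_pi_pos (fun x => (q x : ℂ)) n = 0 := by
  have hexp : ∀ x : ℝ, fourier (-n) (x : AddCircle (2 * π - 0)) • (q x : ℂ) =
      ((q x * cos x : ℝ) : ℂ) - n * ((q x * sin x : ℝ) : ℂ) * I := by
    intro x
    rw [fourier_coe_apply, smul_eq_mul]
    rcases (abs_eq zero_le_one).1 hn with rfl | rfl
    · have : 2 * π * I * ((-(1 : ℤ) : ℤ) : ℂ) * x / ((2 * π - 0 : ℝ) : ℂ) = (-x : ℝ) * I := by
        push_cast; field_simp; ring
      rw [this, Complex.exp_mul_I, ← Complex.ofReal_cos, ← Complex.ofReal_sin, Real.cos_neg,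
        Real.sin_neg]
      push_cast; ring
    · have : 2 * π * I * ((-(-1 : ℤ) : ℤ) : ℂ) * x / ((2 * π - 0 : ℝ) : ℂ) = (x : ℝ) * I := by
        push_cast; field_simp; ring
      rw [this, Complex.exp_mul_I, ← Complex.ofReal_cos, ← Complex.ofReal_sin]
      push_cast; ring
  have hint : ∀ {g : ℝ → ℝ}, IntervalIntegrable g volume 0 (2 * π) →
      IntervalIntegrable (fun x => (g x : ℂ)) volume 0 (2 * π) :=
    fun hg => ⟨hg.1.ofReal, hg.2.ofReal⟩
  rw [fourierCoeffOn_eq_integral, intervalIntegral.integral_congr fun x _ => hexp x,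
    intervalIntegral.integral_sub, intervalIntegral.integral_mul_const,
    intervalIntegral.integral_const_mul, intervalIntegral.integral_ofReal,
    intervalIntegral.integral_ofReal, hcos, hsin]
  · simp
  · exact hint (hq.mul_continuousOn continuous_cos.continuousOn)
  · exact ((hint (hq.mul_continuousOn continuous_sin.continuousOn)).const_mul _).mul_const _

theorem nine_mul_integral_sq_le_integral_deriv_sq_of_antiperiodic {q : ℝ → ℝ}
    (hq : ContDiff ℝ 1 q) (hanti : Antiperiodic q π)
    (hcos : ∫ x in (0 : ℝ)..2 * π, q x * cos x = 0)
    (hsin : ∫ x in (0 : ℝ)..2 * π, q x * sin x = 0) :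
    9 * ∫ x in (0 : ℝ)..2 * π, q x ^ 2 ≤ ∫ x in (0 : ℝ)..2 * π, deriv q x ^ 2 := by
  have hcoeff : ∀ n : ℤ, |n| < (3 : ℕ) →
      fourierCoeffOn two_pi_pos (fun x => (q x : ℂ)) n = 0 := by
    intro n hn
    rcases Int.even_or_odd n with heven | hodd
    · refine fourierCoeffOn_eq_zero_of_antiperiodic _ (fun x => ?_) heven
      simp [hanti x]
    · refine fourierCoeffOn_ofReal_eq_zero_of_integral_mul_cos_sin
        (hq.continuous.intervalIntegrable _ _) hcos hsin ?_
      obtain ⟨k, rfl⟩ := hodd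
      rw [abs_lt] at hn
      have : k = 0 ∨ k = -1 := by push_cast at hn; omega
      rcases this with rfl | rfl <;> norm_num
  have h := sq_mul_integral_norm_sq_le_integral_norm_deriv_sq two_pi_pos
    (fun x _ => (hq.differentiable one_ne_zero x).hasDerivAt.ofReal_comp)
    (Complex.continuous_ofReal.comp (hq.continuous_deriv le_rfl)).continuousOn
    (by simpa using congrArg Complex.ofReal (hanti.periodic_two_mul 0).symm) 3 hcoeff
  norm_num [Complex.norm_real, sq_abs, pi_ne_zero] at h
  exact h

theorem integral_add_const_sq_of_integral_eq_zero {q : ℝ → ℝ} (hq : Continuous q) {a b : ℝ}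
    (h0 : ∫ x in a..b, q x = 0) (c : ℝ) :
    ∫ x in a..b, (q x + c) ^ 2 = (∫ x in a..b, q x ^ 2) + (b - a) * c ^ 2 := by
  simp only [add_sq]
  rw [intervalIntegral.integral_add ((by fun_prop : Continuous _).intervalIntegrable _ _)
      intervalIntegrable_const,
    intervalIntegral.integral_add ((by fun_prop : Continuous _).intervalIntegrable _ _)
      ((by fun_prop : Continuous _).intervalIntegrable _ _), intervalIntegral.integral_mul_const,
    intervalIntegral.integral_const_mul, h0]
  simp

theorem integral_sub_const_mul_of_integral_eq_zero {f g : ℝ → ℝ} (hf : Continuous f)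
    (hg : Continuous g) {a b : ℝ} (hg0 : ∫ x in a..b, g x = 0) (c : ℝ) :
    ∫ x in a..b, (f x - c) * g x = ∫ x in a..b, f x * g x := by
  simp only [sub_mul]
  rw [intervalIntegral.integral_sub ((hf.fun_mul hg).intervalIntegrable _ _)
    ((continuous_const.fun_mul hg).intervalIntegrable _ _), intervalIntegral.integral_const_mul,
    hg0, mul_zero, sub_zero]

theorem isoperimetric_deficit_ge_constant_width_general
    (p : ℝ → ℝ)
    (hC2 : ContDiff ℝ 2 p)
    (hcos : ∫ φ in (0:ℝ)..(2 * π), p φ * Real.cos φ = 0)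
    (hsin : ∫ φ in (0:ℝ)..(2 * π), p φ * Real.sin φ = 0)
    (w : ℝ) (hwidth : ∀ φ, p φ + p (φ + π) = w)
    (L F A Δ : ℝ)
    (hL : L = ∫ φ in (0:ℝ)..(2 * π), p φ)
    (hF : F = (1 / 2) * ∫ φ in (0:ℝ)..(2 * π), (p φ ^ 2 - (deriv p φ) ^ 2))
    (hA : A = (1 / 2) * ∫ φ in (0:ℝ)..(2 * π), p φ ^ 2)
    (hΔ : Δ = L ^ 2 - 4 * π * F) :
    Δ ≥ (32 / 9) * π * (A - F) := by
  set q : ℝ → ℝ := fun φ => p φ - w / 2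
  have hanti : Antiperiodic q π := fun φ => by simp only [q]; linarith [hwidth φ]
  have hpc : Continuous p := hC2.continuous
  have hq_mean : ∫ φ in (0:ℝ)..2 * π, q φ = 0 := by
    simpa using hanti.intervalIntegral_add_two_mul_eq_zero 0
  have hL' : L = π * w := by
    rw [intervalIntegral.integral_sub (hpc.intervalIntegrable _ _) intervalIntegrable_const,
      intervalIntegral.integral_const, ← hL] at hq_mean
    simp only [sub_zero, smul_eq_mul] at hq_mean
    linarith
  have hp2 : ∫ φ in (0:ℝ)..2 * π, p φ ^ 2 =
      (∫ φ in (0:ℝ)..2 * π, q φ ^ 2) + 2 * π * (w / 2) ^ 2 := by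
    simpa [q] using integral_add_const_sq_of_integral_eq_zero (by fun_prop) hq_mean (w / 2)
  have hwirt : 9 * ∫ φ in (0:ℝ)..2 * π, q φ ^ 2 ≤ ∫ φ in (0:ℝ)..2 * π, deriv p φ ^ 2 := by
    simpa [q] using nine_mul_integral_sq_le_integral_deriv_sq_of_antiperiodic
      ((hC2.of_le one_le_two).sub contDiff_const) hanti
      ((integral_sub_const_mul_of_integral_eq_zero hpc continuous_cos (by simp) _).trans hcos)
      ((integral_sub_const_mul_of_integral_eq_zero hpc continuous_sin (by simp) _).trans hsin)
  rw [intervalIntegral.integral_sub ((hpc.fun_pow 2).intervalIntegrable _ _)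
    (((hC2.continuous_deriv one_le_two).fun_pow 2).intervalIntegrable _ _), hp2] at hF
  rw [hp2] at hA
  subst hΔ hF hA hL'
  nlinarith [pi_pos]

/-- Proposition 3.2: for convex sets of constant width,
`Δ ≥ (32/9)π(A − F)`. -/
theorem isoperimetric_deficit_ge_constant_width
    (p : ℝ → ℝ)
    (hper : Function.Periodic p (2 * π))
    (hC2 : ContDiff ℝ 2 p)
    (hconv : ∀ φ, p φ + deriv (deriv p) φ > 0)
    (hcos : ∫ φ in (0:ℝ)..(2 * π), p φ * Real.cos φ = 0)
    (hsin : ∫ φ in (0:ℝ)..(2 * π), p φ * Real.sin φ = 0)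
    (w : ℝ) (hwidth : ∀ φ, p φ + p (φ + π) = w)
    (L F A Δ : ℝ)
    (hL : L = ∫ φ in (0:ℝ)..(2 * π), p φ)
    (hF : F = (1 / 2) * ∫ φ in (0:ℝ)..(2 * π), (p φ ^ 2 - (deriv p φ) ^ 2))
    (hA : A = (1 / 2) * ∫ φ in (0:ℝ)..(2 * π), p φ ^ 2)
    (hΔ : Δ = L ^ 2 - 4 * π * F) :
    Δ ≥ (32 / 9) * π * (A - F) :=
  isoperimetric_deficit_ge_constant_width_general p hC2 hcos hsin w hwidth L F A Δ hL hF hA hΔ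
end

section
/- Let p(φ) = a₀ + a₂cos(2φ) + b₂sin(2φ) with a₂² + b₂² ≠ 0, and suppose p(φ) + p''(φ) > 0 for all φ (so p is the support function of a closed convex curve C of length L = ∫₀^{2π} p dφ = 2πa₀). Then a₀ > 0, and the interior parallel curve to C at distance L/(2π) = a₀, namely the curve with generalized support function q = p − a₀ parametrized by φ ↦ (q(φ)cos φ − q'(φ)sin φ, q(φ)sin φ + q'(φ)cos φ), is an astroid: there exist a ≠ 0 and an angle θ such that its image equals the image of the astroid ψ ↦ (2a sin³ψ, 2a cos³ψ) rotated by θ about the origin. -/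
/-!
Write the non-constant part of `p` as a single second harmonic,
`a₂ cos 2φ + b₂ sin 2φ = R sin (2(φ - θ))` with `R = √(a₂² + b₂²) > 0`. The harmonic integrates to
zero over a period, so `L = 2πa₀`, and it changes sign under `φ ↦ φ + π/2`, so evaluating
`p + p'' = a₀ - 3R sin (2(φ - θ)) > 0` at two such points gives `a₀ > 0`. The parallel curve then
has support function `q(φ) = R sin (2(φ - θ))`; translating the parameter of a support function by
`θ` rotates its curve by `θ`, and `R sin 2φ` is exactly the support function of the astroid
`(2R sin³φ, 2R cos³φ)`.
-/

open Real

noncomputable def supportCurve (q : ℝ → ℝ) (φ : ℝ) : ℝ × ℝ :=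
  (q φ * cos φ - deriv q φ * sin φ, q φ * sin φ + deriv q φ * cos φ)

noncomputable def rotate (θ : ℝ) (v : ℝ × ℝ) : ℝ × ℝ :=
  (v.1 * cos θ - v.2 * sin θ, v.1 * sin θ + v.2 * cos θ)

noncomputable def astroid (a ψ : ℝ) : ℝ × ℝ :=
  (2 * a * sin ψ ^ 3, 2 * a * cos ψ ^ 3)

theorem supportCurve_comp_sub (r : ℝ → ℝ) (θ φ : ℝ) :
    supportCurve (fun φ => r (φ - θ)) φ = rotate θ (supportCurve r (φ - θ)) := by
  obtain ⟨ψ, rfl⟩ : ∃ ψ, φ = ψ + θ := ⟨φ - θ, by ring⟩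
  simp only [supportCurve, rotate, deriv_comp_sub_const, add_sub_cancel_right, cos_add, sin_add,
    Prod.mk.injEq]
  constructor <;> ring

theorem range_supportCurve_comp_sub (r : ℝ → ℝ) (θ : ℝ) :
    Set.range (supportCurve fun φ => r (φ - θ)) = rotate θ '' Set.range (supportCurve r) := by
  have h : (supportCurve fun φ => r (φ - θ)) = rotate θ ∘ supportCurve r ∘ Equiv.subRight θ :=
    funext (supportCurve_comp_sub r θ)
  rw [h, Set.range_comp, Set.range_comp, Equiv.range_eq_univ, Set.image_univ]

theorem hasDerivAt_mul_cos_add_mul_sin (a b k x : ℝ) :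
    HasDerivAt (fun x => a * cos (k * x) + b * sin (k * x))
      (k * b * cos (k * x) + -(k * a) * sin (k * x)) x := by
  have hk : HasDerivAt (fun x => k * x) k x := by simpa using (hasDerivAt_id x).const_mul k
  exact ((hk.cos.const_mul a).add (hk.sin.const_mul b)).congr_deriv (by ring)

theorem deriv_deriv_mul_cos_add_mul_sin (a b k : ℝ) :
    deriv (deriv fun x => a * cos (k * x) + b * sin (k * x)) =
      fun x => -k ^ 2 * (a * cos (k * x) + b * sin (k * x)) := by
  have hderiv (a b : ℝ) : deriv (fun x => a * cos (k * x) + b * sin (k * x)) =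
      fun x => k * b * cos (k * x) + -(k * a) * sin (k * x) :=
    funext fun x => (hasDerivAt_mul_cos_add_mul_sin a b k x).deriv
  rw [hderiv, hderiv]
  ext x
  ring

theorem supportCurve_mul_sin_two_mul (a : ℝ) :
    supportCurve (fun φ => a * sin (2 * φ)) = astroid a := by
  have hd (φ : ℝ) : deriv (fun φ => a * sin (2 * φ)) φ = 2 * a * cos (2 * φ) := by
    simpa using (hasDerivAt_mul_cos_add_mul_sin 0 a 2 φ).deriv
  ext φ <;> rw [supportCurve, hd, sin_two_mul, cos_two_mul] <;> simp only [astroid]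
  · linear_combination -2 * a * sin φ * sin_sq_add_cos_sq φ
  · linear_combination 2 * a * cos φ * sin_sq_add_cos_sq φ

theorem integral_const_add_mul_cos_add_mul_sin_two_mul (c a b : ℝ) :
    ∫ x in (0 : ℝ)..2 * π, (c + (a * cos (2 * x) + b * sin (2 * x))) = 2 * π * c := by
  have hcos : IntervalIntegrable (fun x => a * cos (2 * x)) MeasureTheory.volume 0 (2 * π) :=
    (by fun_prop : Continuous _).intervalIntegrable _ _
  have hsin : IntervalIntegrable (fun x => b * sin (2 * x)) MeasureTheory.volume 0 (2 * π) :=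
    (by fun_prop : Continuous _).intervalIntegrable _ _
  rw [intervalIntegral.integral_add intervalIntegrable_const (hcos.add hsin),
    intervalIntegral.integral_add hcos hsin, intervalIntegral.integral_const,
    intervalIntegral.integral_const_mul, intervalIntegral.integral_const_mul,
    intervalIntegral.integral_comp_mul_left cos two_ne_zero,
    intervalIntegral.integral_comp_mul_left sin two_ne_zero, integral_cos, integral_sin]
  norm_num [sin_two_mul, cos_two_mul]

theorem pos_of_forall_pos_sub_mul_cos_add_mul_sin (c a b k : ℝ)
    (h : ∀ φ, 0 < c - k * (a * cos (2 * φ) + b * sin (2 * φ))) : 0 < c := by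
  have h₀ := h 0
  have h₁ := h (π / 2)
  rw [mul_div_cancel₀ π two_ne_zero, cos_pi, sin_pi] at h₁
  simp only [mul_zero, cos_zero, sin_zero] at h₀
  linarith

theorem exists_mul_cos_add_mul_sin_eq (a b : ℝ) :
    ∃ θ, ∀ x, a * cos x + b * sin x = √(a ^ 2 + b ^ 2) * sin (x - θ) := by
  set z : ℂ := ⟨b, -a⟩
  have hz : ‖z‖ = √(a ^ 2 + b ^ 2) := by
    rw [Complex.norm_def, Complex.normSq_mk]
    ring_nf
  refine ⟨z.arg, fun x => ?_⟩
  rw [← hz, sin_sub, mul_sub, ← mul_assoc, ← mul_assoc, mul_right_comm, Complex.norm_mul_cos_arg,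
    mul_right_comm _ (cos x), Complex.norm_mul_sin_arg]
  ring

/-- Proposition 4.1: if `p(φ) = a₀ + a₂ cos 2φ + b₂ sin 2φ` with
`a₂² + b₂² ≠ 0` is the support function of a closed convex curve `C` of
length `L`, then `a₀ > 0`, `L = 2πa₀`, and the interior parallel curve to `C`
at distance `L/(2π)` is (a rotated copy of) an astroid. -/
theorem parallel_curve_is_astroid
    (a₀ a₂ b₂ : ℝ) (p q : ℝ → ℝ) (L : ℝ)
    (hp : ∀ φ, p φ = a₀ + a₂ * Real.cos (2 * φ) + b₂ * Real.sin (2 * φ))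
    (hne : a₂ ^ 2 + b₂ ^ 2 ≠ 0)
    (hconv : ∀ φ, p φ + deriv (deriv p) φ > 0)
    (hL : L = ∫ φ in (0:ℝ)..(2 * π), p φ)
    (hq : ∀ φ, q φ = p φ - L / (2 * π)) :
    0 < a₀ ∧ L = 2 * π * a₀ ∧
      ∃ a : ℝ, a ≠ 0 ∧ ∃ θ : ℝ,
        (Set.range fun φ : ℝ =>
          ((q φ * Real.cos φ - deriv q φ * Real.sin φ,
            q φ * Real.sin φ + deriv q φ * Real.cos φ) : ℝ × ℝ)) =
        (Set.range fun ψ : ℝ =>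
          ((2 * a * Real.sin ψ ^ 3 * Real.cos θ -
              2 * a * Real.cos ψ ^ 3 * Real.sin θ,
            2 * a * Real.sin ψ ^ 3 * Real.sin θ +
              2 * a * Real.cos ψ ^ 3 * Real.cos θ) : ℝ × ℝ)) := by
  have hp' : p = fun φ => a₀ + (a₂ * cos (2 * φ) + b₂ * sin (2 * φ)) :=
    funext fun φ => (hp φ).trans (add_assoc _ _ _)
  have ha₀ : 0 < a₀ := by
    refine pos_of_forall_pos_sub_mul_cos_add_mul_sin a₀ a₂ b₂ 3 fun φ => ?_
    have h := hconv φ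
    rw [hp', deriv_const_add', deriv_deriv_mul_cos_add_mul_sin] at h
    linarith
  have hLa : L = 2 * π * a₀ := by rw [hL, hp', integral_const_add_mul_cos_add_mul_sin_two_mul]
  obtain ⟨θ, hθ⟩ := exists_mul_cos_add_mul_sin_eq a₂ b₂
  set R := √(a₂ ^ 2 + b₂ ^ 2)
  have hR : R ≠ 0 := (sqrt_pos.2 (lt_of_le_of_ne (by positivity) (Ne.symm hne))).ne'
  have hq' : q = fun φ => R * sin (2 * (φ - θ / 2)) := by
    funext φ
    rw [hq, hp, hLa, mul_div_cancel_left₀ a₀ two_pi_pos.ne', add_assoc, add_sub_cancel_left, hθ,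
      mul_sub, mul_div_cancel₀ θ two_ne_zero]
  refine ⟨ha₀, hLa, R, hR, θ / 2, ?_⟩
  change Set.range (supportCurve q) = Set.range (rotate (θ / 2) ∘ astroid R)
  rw [hq', range_supportCurve_comp_sub (fun ψ => R * sin (2 * ψ)), supportCurve_mul_sin_two_mul,
    Set.range_comp]
end

section
/- Let p : ℝ → ℝ be a 2π-periodic function of class C². Set L = ∫₀^{2π} p dφ, F = ½∫₀^{2π}(p² − p'²) dφ, Δ = L² − 4πF, and F_e = ½∫₀^{2π} p'² dφ − ½∫₀^{2π} p''² dφ. Then 0 ≤ Δ ≤ π|F_e| (Hurwitz's inequality). -/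
/-!
Expand `p` in a Fourier series with coefficients `cₙ`. By Parseval and `(p')ₙ = i n cₙ`,
`Δ = 4π² ∑_{n ≠ 0} (n² - 1)|cₙ|²` and `F_e = -π ∑ n²(n² - 1)|cₙ|²`, so both inequalities
reduce to the termwise bounds `n² - 1 ≥ 0` and `(n² - 1)(n² - 4) ≥ 0` for nonzero integers `n`.
-/

open Real MeasureTheory Complex

theorem Function.Periodic.deriv {𝕜 F : Type*} [NontriviallyNormedField 𝕜] [NormedAddCommGroup F]
    [NormedSpace 𝕜 F] {f : 𝕜 → F} {c : 𝕜} (h : Function.Periodic f c) :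
    Function.Periodic (deriv f) c := fun x => by
  rw [← deriv_comp_add_const, show (fun y => f (y + c)) = f from funext h]

theorem fourierCoeffOn_deriv_of_endpoints_eq {a b : ℝ} (hab : a < b) {f f' : ℝ → ℂ}
    (hf : ∀ x ∈ Set.uIcc a b, HasDerivAt f (f' x) x) (hf' : IntervalIntegrable f' volume a b)
    (hfab : f b = f a) (n : ℤ) :
    fourierCoeffOn hab f' n = 2 * π * I * n / (b - a) * fourierCoeffOn hab f n := by
  rcases eq_or_ne n 0 with rfl | hn
  · simp [fourierCoeffOn_eq_integral, intervalIntegral.integral_eq_sub_of_hasDerivAt hf hf', hfab]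
  · have hba : (b : ℂ) - a ≠ 0 := by exact_mod_cast (sub_pos.2 hab).ne'
    rw [fourierCoeffOn_of_hasDerivAt hab hn hf hf', hfab, sub_self, mul_zero, zero_sub]
    field_simp

noncomputable def realFourierCoeff (f : ℝ → ℝ) (n : ℤ) : ℂ :=
  fourierCoeffOn two_pi_pos (fun x => (f x : ℂ)) n

theorem realFourierCoeff_zero (f : ℝ → ℝ) :
    realFourierCoeff f 0 = ((2 * π)⁻¹ * ∫ x in (0:ℝ)..(2 * π), f x : ℝ) := by
  simp [realFourierCoeff, fourierCoeffOn_eq_integral, intervalIntegral.integral_ofReal]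

theorem hasSum_sq_realFourierCoeff {f : ℝ → ℝ} (hf : Continuous f) :
    HasSum (fun n => ‖realFourierCoeff f n‖ ^ 2) ((2 * π)⁻¹ * ∫ x in (0:ℝ)..(2 * π), f x ^ 2) := by
  have hf' : Continuous fun x => (f x : ℂ) := continuous_ofReal.comp hf
  have hL2 : MemLp (fun x => (f x : ℂ)) 2 (volume.restrict (Set.Ioc 0 (2 * π))) :=
    (memLp_two_iff_integrable_sq_norm hf'.aestronglyMeasurable).2 (hf'.norm.pow 2).integrableOn_Ioc
  simpa only [realFourierCoeff, norm_real, Real.norm_eq_abs, sq_abs, sub_zero, smul_eq_mul] using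
    hasSum_sq_fourierCoeffOn two_pi_pos hL2

theorem sq_norm_realFourierCoeff_deriv {f : ℝ → ℝ} (hf : ContDiff ℝ 1 f)
    (hper : f (2 * π) = f 0) (n : ℤ) :
    ‖realFourierCoeff (deriv f) n‖ ^ 2 = (n : ℝ) ^ 2 * ‖realFourierCoeff f n‖ ^ 2 := by
  have hderiv : ∀ x ∈ Set.uIcc 0 (2 * π),
      HasDerivAt (fun y => (f y : ℂ)) ((deriv f x : ℝ) : ℂ) x := fun x _ =>
    ((hf.differentiable one_ne_zero) x).hasDerivAt.ofReal_comp
  have hint : IntervalIntegrable (fun x => ((deriv f x : ℝ) : ℂ)) volume 0 (2 * π) :=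
    (continuous_ofReal.comp (hf.continuous_deriv le_rfl)).intervalIntegrable _ _
  have hfactor : 2 * π * I * n / ((2 * π : ℝ) - (0 : ℝ) : ℂ) = I * n := by
    push_cast
    rw [sub_zero]
    field_simp
  rw [realFourierCoeff,
    fourierCoeffOn_deriv_of_endpoints_eq two_pi_pos hderiv hint (by rw [hper]) n, hfactor,
    ← realFourierCoeff, norm_mul, norm_mul, norm_I, one_mul, norm_intCast, mul_pow, sq_abs]

theorem hasSum_sq_realFourierCoeff_derivs {p : ℝ → ℝ}
    (hper : Function.Periodic p (2 * π)) (hp : ContDiff ℝ 2 p) :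
    HasSum (fun n : ℤ => (n : ℝ) ^ 2 * ‖realFourierCoeff p n‖ ^ 2)
        ((2 * π)⁻¹ * ∫ x in (0:ℝ)..(2 * π), deriv p x ^ 2) ∧
      HasSum (fun n : ℤ => (n : ℝ) ^ 4 * ‖realFourierCoeff p n‖ ^ 2)
        ((2 * π)⁻¹ * ∫ x in (0:ℝ)..(2 * π), deriv (deriv p) x ^ 2) := by
  have hp' : ContDiff ℝ 1 (deriv p) := hp.iterate_deriv' 1 1
  have hcoeff := sq_norm_realFourierCoeff_deriv (hp.of_le one_le_two) (by simpa using hper 0)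
  have hcoeff' := sq_norm_realFourierCoeff_deriv hp' (by simpa using hper.deriv 0)
  refine ⟨?_, ?_⟩
  · simpa only [hcoeff] using hasSum_sq_realFourierCoeff hp'.continuous
  · simpa only [hcoeff', hcoeff, ← mul_assoc, ← pow_add] using
      hasSum_sq_realFourierCoeff (hp'.continuous_deriv le_rfl)

theorem Int.one_le_sq_of_ne_zero {n : ℤ} (hn : n ≠ 0) : 1 ≤ n ^ 2 := by
  nlinarith [Int.one_le_abs hn, sq_abs n]

theorem Int.sq_sub_one_mul_sq_sub_four_nonneg (n : ℤ) : 0 ≤ (n ^ 2 - 1) * (n ^ 2 - 4) := by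
  rcases le_or_gt |n| 1 with h | h
  · have : n ^ 2 ≤ 1 := by nlinarith [sq_abs n, abs_nonneg n]
    exact mul_nonneg_of_nonpos_of_nonpos (by linarith) (by linarith)
  · have : 4 ≤ n ^ 2 := by nlinarith [sq_abs n]
    exact mul_nonneg (by linarith) (by linarith)

theorem hurwitz_bounds_of_hasSum {c : ℤ → ℝ} (hc : ∀ n, 0 ≤ c n) {A B C : ℝ} (hA : HasSum c A)
    (hB : HasSum (fun n : ℤ => (n : ℝ) ^ 2 * c n) B)
    (hC : HasSum (fun n : ℤ => (n : ℝ) ^ 4 * c n) C) :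
    0 ≤ c 0 + B - A ∧ 4 * (c 0 + B - A) ≤ C - B := by
  have hc0 := hasSum_ite_eq (0 : ℤ) (c 0)
  -- the extra `c 0` cancels the negative `n = 0` summand of `∑ (n² - 1) cₙ`
  have hD : HasSum (fun n : ℤ => ((n : ℝ) ^ 2 - 1) * c n + if n = 0 then c 0 else 0)
      (B - A + c 0) :=
    ((hB.sub hA).add hc0).congr_fun fun n => by ring
  have hE : HasSum (fun n : ℤ => ((n : ℝ) ^ 2 - 1) * ((n : ℝ) ^ 2 - 4) * c n)
      (C - B - 4 * (B - A)) :=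
    ((hC.sub hB).sub ((hB.sub hA).mul_left 4)).congr_fun fun n => by ring
  have hD_nonneg : ∀ n : ℤ, 0 ≤ ((n : ℝ) ^ 2 - 1) * c n + if n = 0 then c 0 else 0 := by
    intro n
    rcases eq_or_ne n 0 with rfl | hn
    · simp
    · simpa [hn] using
        mul_nonneg (sub_nonneg.2 (by exact_mod_cast Int.one_le_sq_of_ne_zero hn)) (hc n)
  have hE_ge : ∀ n : ℤ,
      4 * (if n = 0 then c 0 else 0) ≤ ((n : ℝ) ^ 2 - 1) * ((n : ℝ) ^ 2 - 4) * c n := by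
    intro n
    rcases eq_or_ne n 0 with rfl | hn
    · simp
    · simpa [hn] using
        mul_nonneg (by exact_mod_cast Int.sq_sub_one_mul_sq_sub_four_nonneg n) (hc n)
  exact ⟨by linarith [hasSum_le hD_nonneg hasSum_zero hD],
    by linarith [hasSum_le hE_ge (hc0.mul_left 4) hE]⟩

/-- Hurwitz's inequality: `0 ≤ Δ ≤ π|F_e|`, where `F_e` is the algebraic
area enclosed by the evolute. -/
theorem hurwitz_inequality
    (p : ℝ → ℝ)
    (hper : Function.Periodic p (2 * π))
    (hC2 : ContDiff ℝ 2 p)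
    (L F Δ Fe : ℝ)
    (hL : L = ∫ φ in (0:ℝ)..(2 * π), p φ)
    (hF : F = (1 / 2) * ∫ φ in (0:ℝ)..(2 * π), (p φ ^ 2 - (deriv p φ) ^ 2))
    (hΔ : Δ = L ^ 2 - 4 * π * F)
    (hFe : Fe = (1 / 2) * (∫ φ in (0:ℝ)..(2 * π), (deriv p φ) ^ 2) -
            (1 / 2) * ∫ φ in (0:ℝ)..(2 * π), (deriv (deriv p) φ) ^ 2) :
    0 ≤ Δ ∧ Δ ≤ π * |Fe| := by
  have hA := hasSum_sq_realFourierCoeff hC2.continuous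
  obtain ⟨hB, hC⟩ := hasSum_sq_realFourierCoeff_derivs hper hC2
  obtain ⟨hΔ_nonneg, hΔ_le⟩ := hurwitz_bounds_of_hasSum (fun n => sq_nonneg _) hA hB hC
  have hc0 : ‖realFourierCoeff p 0‖ ^ 2 = ((2 * π)⁻¹ * L) ^ 2 := by
    rw [realFourierCoeff_zero, norm_real, Real.norm_eq_abs, sq_abs, hL]
  have hsplit : ∫ φ in (0:ℝ)..(2 * π), (p φ ^ 2 - deriv p φ ^ 2) =
      (∫ φ in (0:ℝ)..(2 * π), p φ ^ 2) - ∫ φ in (0:ℝ)..(2 * π), deriv p φ ^ 2 :=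
    intervalIntegral.integral_sub ((hC2.continuous.pow 2).intervalIntegrable _ _)
      (((hC2.continuous_deriv one_le_two).pow 2).intervalIntegrable _ _)
  rw [hc0] at hΔ_nonneg hΔ_le
  set I₀ := ∫ φ in (0:ℝ)..(2 * π), p φ ^ 2
  set I₁ := ∫ φ in (0:ℝ)..(2 * π), deriv p φ ^ 2
  set I₂ := ∫ φ in (0:ℝ)..(2 * π), deriv (deriv p) φ ^ 2
  have hΔ_eq : Δ = 4 * π ^ 2 * (((2 * π)⁻¹ * L) ^ 2 + (2 * π)⁻¹ * I₁ - (2 * π)⁻¹ * I₀) := by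
    rw [hΔ, hF, hsplit]
    field_simp
    ring
  have hFe_eq : Fe = -(π * ((2 * π)⁻¹ * I₂ - (2 * π)⁻¹ * I₁)) := by
    rw [hFe]
    field_simp
    ring
  rw [hΔ_eq, hFe_eq, abs_neg, abs_of_nonneg (mul_nonneg pi_pos.le (by linarith))]
  exact ⟨mul_nonneg (by positivity) hΔ_nonneg,
    by linarith [mul_le_mul_of_nonneg_left hΔ_le (sq_nonneg π)]⟩
end
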